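/- Let n ≥ 3 and assume condition (ON). For any two vertices S, W of G(V), there exists a walk of length 4 from S to W in G(V) if and only if (K does not have exactly 4 elements, or n ≠ 3, or S + W is non-degenerate). -/

import Mathlib

/-!
Every vertex is a line `⟨u⟩` with `Ψ(u, u) ≠ 0`, and for vertices `⟨u⟩, ⟨w⟩` the plane
`U = ⟨u, w⟩` decides. If `U^⊥` contains an anisotropic `z`, then `⟨u⟩ - ⟨z⟩ - ⟨u⟩ - ⟨z⟩ - ⟨w⟩`
is a walk. Such a `z` exists when `U` is non-degenerate, as then `U^⊥ ≠ 0` is too, and when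
`n ≥ 4`, since otherwise `U^⊥ ≤ U^⊥⊥ = U` would be totally isotropic of dimension `≥ dim U`.
If `U` is degenerate but the fixed field `K^τ` has an element other than `0, 1`, a walk
`⟨u⟩ - ⟨a⟩ - ⟨z⟩ - ⟨b⟩ - ⟨w⟩` is built from the radical of `U`. As `K` is `2`-dimensional over
`K^τ`, this leaves `|K| = 4`, `n = 3`. There all nonzero norms equal `1`, so a vertex two steps
away from `⟨u⟩` is `⟨u⟩` itself or orthogonal to it; hence every walk from `⟨u⟩` ends at a
vertex `W` with `⟨u⟩ + W` non-degenerate.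
-/

namespace FramePaper

variable {K : Type*} [Field K]

/-- The standard Hermitian form `Ψ(v,w) = ∑ i, v i * τ (w i)` on `Fin n → K`. -/
def Psi (τ : K → K) {n : ℕ} (v w : Fin n → K) : K :=
  ∑ i, v i * τ (w i)

lemma Psi_add_left (τ : K → K) {n : ℕ} (a b w : Fin n → K) :
    Psi τ (a + b) w = Psi τ a w + Psi τ b w := by
  simp [Psi, add_mul, Finset.sum_add_distrib]

lemma Psi_smul_left (τ : K → K) {n : ℕ} (c : K) (a w : Fin n → K) :
    Psi τ (c • a) w = c * Psi τ a w := by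
  simp [Psi, Finset.mul_sum, mul_assoc]

/-- The orthogonal complement `S^⊥ = {v | ∀ s ∈ S, Ψ(v,s) = 0}`. -/
def perp (τ : K → K) {n : ℕ} (S : Submodule K (Fin n → K)) :
    Submodule K (Fin n → K) where
  carrier := {v | ∀ s ∈ S, Psi τ v s = 0}
  add_mem' := by
    intro a b ha hb
    show ∀ s ∈ S, Psi τ (a + b) s = 0
    intro s hs
    rw [Psi_add_left, ha s hs, hb s hs, add_zero]
  zero_mem' := by
    show ∀ s ∈ S, Psi τ 0 s = 0
    intro s hs
    simp [Psi]
  smul_mem' := by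
    intro c a ha
    show ∀ s ∈ S, Psi τ (c • a) s = 0
    intro s hs
    rw [Psi_smul_left, ha s hs, mul_zero]

/-- A subspace `S` is non-degenerate iff `S ⊓ S^⊥ = ⊥`. -/
def Nondeg (τ : K → K) {n : ℕ} (S : Submodule K (Fin n → K)) : Prop :=
  S ⊓ perp τ S = ⊥

/-- Vertices of `G(V)`: the `1`-dimensional non-degenerate subspaces. -/
def IsVertex (τ : K → K) {n : ℕ} (S : Submodule K (Fin n → K)) : Prop :=
  Module.finrank K S = 1 ∧ Nondeg τ S

/-- The graph `G(V)` on the `1`-dimensional non-degenerate subspaces of `V = Fin n → K`,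
with `S, W` adjacent iff `S ≠ W` and `Ψ(s,w) = 0` for all `s ∈ S`, `w ∈ W`. -/
def FrameGraph (τ : K →+* K) (hτ2 : ∀ x, τ (τ x) = x) (n : ℕ) :
    SimpleGraph {S : Submodule K (Fin n → K) // IsVertex (⇑τ) S} where
  Adj S W := S ≠ W ∧ ∀ s ∈ S.1, ∀ w ∈ W.1, Psi (⇑τ) s w = 0
  symm := ⟨by
    rintro S W ⟨hne, h⟩
    refine ⟨hne.symm, fun w hw s hs => ?_⟩
    have key : Psi (⇑τ) w s = τ (Psi (⇑τ) s w) := by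
      simp only [Psi, map_sum, map_mul, hτ2]
      exact Finset.sum_congr rfl fun i _ => mul_comm _ _
    rw [key, h s hs w hw, map_zero]⟩
  loopless := ⟨fun S h => h.1 rfl⟩

section Form

open Module Submodule

variable (τ : K →+* K) {n : ℕ}

lemma Psi_add_right (v w w' : Fin n → K) : Psi τ v (w + w') = Psi τ v w + Psi τ v w' := by
  simp [Psi, mul_add, Finset.sum_add_distrib]

lemma Psi_smul_right (c : K) (v w : Fin n → K) : Psi τ v (c • w) = τ c * Psi τ v w := by
  simp only [Psi, Pi.smul_apply, smul_eq_mul, map_mul, Finset.mul_sum]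
  exact Finset.sum_congr rfl fun i _ => by ring

lemma Psi_zero_left (w : Fin n → K) : Psi τ 0 w = 0 := by
  simp [Psi]

lemma ne_zero_of_Psi_self_ne_zero {v : Fin n → K} (hv : Psi τ v v ≠ 0) : v ≠ 0 := by
  rintro rfl
  exact hv (Psi_zero_left τ 0)

lemma Psi_conj (hτ2 : ∀ x, τ (τ x) = x) (v w : Fin n → K) : Psi τ w v = τ (Psi τ v w) := by
  simp only [Psi, map_sum, map_mul, hτ2]
  exact Finset.sum_congr rfl fun i _ => mul_comm _ _

lemma Psi_eq_zero_comm (hτ2 : ∀ x, τ (τ x) = x) {v w : Fin n → K} :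
    Psi τ v w = 0 ↔ Psi τ w v = 0 := by
  rw [Psi_conj τ hτ2 v w, map_eq_zero]

lemma Psi_add_smul_add_smul (x y z w : Fin n → K) (a b : K) :
    Psi τ (x + a • y) (z + b • w) =
      Psi τ x z + τ b * Psi τ x w + a * Psi τ y z + a * τ b * Psi τ y w := by
  simp only [Psi_add_left, Psi_add_right, Psi_smul_left, Psi_smul_right]
  ring

lemma mem_perp_span_iff {s : Set (Fin n → K)} {v : Fin n → K} :
    v ∈ perp τ (span K s) ↔ ∀ a ∈ s, Psi τ v a = 0 := by
  refine ⟨fun hv a ha => hv a (subset_span ha), fun hv x hx => ?_⟩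
  induction hx using span_induction with
  | mem a ha => exact hv a ha
  | zero => simp [Psi]
  | add a b _ _ ha hb => rw [Psi_add_right, ha, hb, add_zero]
  | smul c a _ ha => rw [Psi_smul_right, ha, mul_zero]

lemma mem_perp_span_singleton_iff {a v : Fin n → K} :
    v ∈ perp τ (K ∙ a) ↔ Psi τ v a = 0 := by
  simp [mem_perp_span_iff]

lemma mem_perp_span_pair_iff {a b v : Fin n → K} :
    v ∈ perp τ (span K {a, b}) ↔ Psi τ v a = 0 ∧ Psi τ v b = 0 := by
  simp [mem_perp_span_iff]

/-- `(span b)^⊥` is the kernel of the matrix with rows `τ ∘ bᵢ`, which are independent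
like the `bᵢ`. -/
lemma finrank_perp_span_range (hτ2 : ∀ x, τ (τ x) = x) {d : ℕ} {b : Fin d → Fin n → K}
    (hb : LinearIndependent K b) : finrank K (perp τ (span K (Set.range b))) = n - d := by
  let conj : (Fin n → K) →+ (Fin n → K) := AddMonoidHom.compLeft τ.toAddMonoidHom (Fin n)
  let M : Matrix (Fin d) (Fin n) K := Matrix.of (conj ∘ b)
  have hker : LinearMap.ker M.mulVecLin = perp τ (span K (Set.range b)) := by
    ext v
    simp only [LinearMap.mem_ker, mem_perp_span_iff, Set.forall_mem_range, funext_iff,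
      Pi.zero_apply, Matrix.mulVecLin_apply, Matrix.mulVec, dotProduct, Psi, M]
    simp [conj, mul_comm]
  have hrows : LinearIndependent K M.row :=
    hb.map_of_injective_injectiveₛ τ conj τ.injective
      (fun v w h => funext fun j => τ.injective (congrFun h j))
      (fun c v => funext fun j => by simp [conj, hτ2])
  have hrank : M.rank = d := by rw [hrows.rank_matrix, Fintype.card_fin]
  have := LinearMap.finrank_range_add_finrank_ker M.mulVecLin
  rw [hker, ← Matrix.rank, hrank, finrank_fin_fun] at this
  omega

lemma finrank_perp (hτ2 : ∀ x, τ (τ x) = x) (X : Submodule K (Fin n → K)) :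
    finrank K (perp τ X) = n - finrank K X := by
  let b := finBasis K X
  have hspan : span K (Set.range (X.subtype ∘ b)) = X := by
    rw [Set.range_comp, ← map_span, b.span_eq, Submodule.map_top, range_subtype]
  rw [← hspan, finrank_perp_span_range τ hτ2 (b.linearIndependent.map' _ X.ker_subtype), hspan]

end Form

section Nondegenerate

open Module Submodule

variable (τ : K →+* K) {n : ℕ}

lemma perp_perp (hτ2 : ∀ x, τ (τ x) = x) (X : Submodule K (Fin n → K)) :
    perp τ (perp τ X) = X := by
  have hle : X ≤ perp τ (perp τ X) := fun x hx s hs => (Psi_eq_zero_comm τ hτ2).mp (hs x hx)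
  have hX : finrank K X ≤ n := by simpa using X.finrank_le
  refine (eq_of_le_of_finrank_le hle ?_).symm
  rw [finrank_perp τ hτ2, finrank_perp τ hτ2]
  omega

lemma nondeg_perp (hτ2 : ∀ x, τ (τ x) = x) {X : Submodule K (Fin n → K)} (h : Nondeg τ X) :
    Nondeg τ (perp τ X) := by
  rw [Nondeg, perp_perp τ hτ2, inf_comm]
  exact h

lemma Psi_eq_zero_of_forall_Psi_self_eq_zero (hτne : (τ : K → K) ≠ id)
    {P : Submodule K (Fin n → K)} (hP : ∀ v ∈ P, Psi τ v v = 0) {x y : Fin n → K}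
    (hx : x ∈ P) (hy : y ∈ P) : Psi τ x y = 0 := by
  by_contra hxy
  have hyx : Psi τ y x = -Psi τ x y := by
    have h := hP (x + y) (add_mem hx hy)
    rw [Psi_add_left, Psi_add_right, Psi_add_right, hP x hx, hP y hy] at h
    linear_combination h
  refine hτne (funext fun c => ?_)
  have h := hP (x + c • y) (add_mem hx (P.smul_mem c hy))
  rw [Psi_add_smul_add_smul, hP x hx, hP y hy, hyx] at h
  have : (τ c - c) * Psi τ x y = 0 := by linear_combination h
  exact sub_eq_zero.mp ((mul_eq_zero.mp this).resolve_right hxy)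

lemma Nondeg.exists_Psi_self_ne_zero (hτne : (τ : K → K) ≠ id) {X : Submodule K (Fin n → K)}
    (hX : Nondeg τ X) (hne : X ≠ ⊥) : ∃ v ∈ X, Psi τ v v ≠ 0 := by
  by_contra! h
  refine hne ?_
  rw [← hX, left_eq_inf]
  exact fun x hx s hs => Psi_eq_zero_of_forall_Psi_self_eq_zero τ hτne h hx hs

lemma Nondeg.exists_mem_perp_Psi_self_ne_zero (hτne : (τ : K → K) ≠ id)
    (hτ2 : ∀ x, τ (τ x) = x) {X : Submodule K (Fin n → K)} (hX : Nondeg τ X)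
    (hlt : finrank K X < n) : ∃ z ∈ perp τ X, Psi τ z z ≠ 0 := by
  refine (nondeg_perp τ hτ2 hX).exists_Psi_self_ne_zero τ hτne fun hbot => ?_
  have h := finrank_perp τ hτ2 X
  rw [hbot, finrank_bot] at h
  omega

lemma exists_mem_perp_Psi_self_ne_zero_of_two_mul_finrank_le (hτne : (τ : K → K) ≠ id)
    (hτ2 : ∀ x, τ (τ x) = x) {X : Submodule K (Fin n → K)} {u : Fin n → K} (hu : u ∈ X)
    (hu0 : Psi τ u u ≠ 0) (hX : 2 * finrank K X ≤ n) : ∃ z ∈ perp τ X, Psi τ z z ≠ 0 := by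
  by_contra! h
  have hle : perp τ X ≤ X := by
    conv_rhs => rw [← perp_perp τ hτ2 X]
    exact fun x hx s hs => Psi_eq_zero_of_forall_Psi_self_eq_zero τ hτne h hx hs
  have heq : perp τ X = X := eq_of_le_of_finrank_le hle (by rw [finrank_perp τ hτ2]; omega)
  exact hu0 (h u (heq.ge hu))

lemma finrank_span_pair_le (a b : Fin n → K) : finrank K (span K {a, b}) ≤ 2 := by
  classical
  have h := finrank_span_finset_le_card (R := K) ({a, b} : Finset (Fin n → K))
  rw [Finset.coe_pair] at h
  exact h.trans Finset.card_le_two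

def gramDet (a b : Fin n → K) : K :=
  Psi τ a a * Psi τ b b - Psi τ a b * Psi τ b a

lemma eq_zero_of_gramDet_ne_zero {a b : Fin n → K} (h : gramDet τ a b ≠ 0) {s t : K}
    (ha : Psi τ (s • a + t • b) a = 0) (hb : Psi τ (s • a + t • b) b = 0) : s = 0 ∧ t = 0 := by
  simp only [Psi_add_left, Psi_smul_left] at ha hb
  constructor
  · have : s * gramDet τ a b = 0 := by
      unfold gramDet
      linear_combination Psi τ b b * ha - Psi τ b a * hb
    exact (mul_eq_zero.mp this).resolve_right h
  · have : t * gramDet τ a b = 0 := by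
      unfold gramDet
      linear_combination Psi τ a a * hb - Psi τ a b * ha
    exact (mul_eq_zero.mp this).resolve_right h

lemma nondeg_span_pair {a b : Fin n → K} (h : gramDet τ a b ≠ 0) :
    Nondeg τ (span K {a, b}) := by
  rw [Nondeg, eq_bot_iff]
  rintro v ⟨hv, hperp⟩
  obtain ⟨s, t, rfl⟩ := mem_span_pair.mp hv
  obtain ⟨ha, hb⟩ := (mem_perp_span_pair_iff τ).mp hperp
  obtain ⟨rfl, rfl⟩ := eq_zero_of_gramDet_ne_zero τ h ha hb
  simp

lemma finrank_span_pair {a b : Fin n → K} (h : gramDet τ a b ≠ 0) :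
    finrank K (span K {a, b}) = 2 := by
  have hli : LinearIndependent K ![a, b] := LinearIndependent.pair_iff.mpr fun s t hst =>
    eq_zero_of_gramDet_ne_zero τ h (by rw [hst, Psi_zero_left]) (by rw [hst, Psi_zero_left])
  have h2 := finrank_span_eq_card hli
  rwa [Matrix.range_cons_cons_empty, Fintype.card_fin] at h2

lemma gramDet_of_Psi_eq_zero {a b : Fin n → K} (hab : Psi τ a b = 0) :
    gramDet τ a b = Psi τ a a * Psi τ b b := by
  simp [gramDet, hab]

lemma nondeg_span_singleton {u : Fin n → K} (hu : Psi τ u u ≠ 0) : Nondeg τ (K ∙ u) := by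
  rw [Nondeg, eq_bot_iff]
  rintro v ⟨hv, hperp⟩
  obtain ⟨c, rfl⟩ := mem_span_singleton.mp hv
  have h := (mem_perp_span_singleton_iff τ).mp hperp
  rw [Psi_smul_left] at h
  simp [(mul_eq_zero.mp h).resolve_right hu]

end Nondegenerate

section Scalars

variable (τ : K →+* K)

lemma exists_conj_ne (hτne : (τ : K → K) ≠ id) : ∃ θ, τ θ ≠ θ := by
  by_contra! h
  exact hτne (funext h)

lemma exists_conj_eq_neg (hτne : (τ : K → K) ≠ id) (hτ2 : ∀ x, τ (τ x) = x) :
    ∃ d : K, d ≠ 0 ∧ τ d = -d := by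
  obtain ⟨θ, hθ⟩ := exists_conj_ne τ hτne
  exact ⟨θ - τ θ, sub_ne_zero.mpr hθ.symm, by rw [map_sub, hτ2]; ring⟩

lemma exists_add_conj_eq (hτne : (τ : K → K) ≠ id) (hτ2 : ∀ x, τ (τ x) = x) {t : K}
    (ht : τ t = t) : ∃ μ, μ + τ μ = t := by
  obtain ⟨x, hx⟩ : ∃ x : K, x + τ x ≠ 0 := by
    by_contra! h
    have h2 : (2 : K) = 0 := by simpa [one_add_one_eq_two] using h 1
    refine hτne (funext fun y => ?_)
    show τ y = y
    linear_combination h y - y * h2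
  have hfix : τ (x + τ x) = x + τ x := by rw [map_add, hτ2, add_comm]
  refine ⟨t / (x + τ x) * x, ?_⟩
  rw [map_mul, map_div₀, ht, hfix]
  field_simp

lemma card_eq_card_fixed_mul_self (hτne : (τ : K → K) ≠ id) (hτ2 : ∀ x, τ (τ x) = x) :
    Nat.card K = Nat.card {x // τ x = x} * Nat.card {x // τ x = x} := by
  obtain ⟨θ, hθ⟩ := exists_conj_ne τ hτne
  have hδ : θ - τ θ ≠ 0 := sub_ne_zero.mpr hθ.symm
  let f : {x // τ x = x} × {x // τ x = x} → K := fun p => p.1 + p.2 * θ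
  have hf : Function.Bijective f := by
    constructor
    · rintro ⟨⟨a, ha⟩, ⟨b, hb⟩⟩ ⟨⟨a', ha'⟩, ⟨b', hb'⟩⟩ h
      simp only [f] at h
      obtain rfl : b = b' := by
        by_contra hbb
        have hθ' : θ = (a' - a) / (b - b') := by
          field_simp [sub_ne_zero.mpr hbb]
          linear_combination h
        exact hθ (by rw [hθ', map_div₀, map_sub, map_sub, ha, hb, ha', hb'])
      obtain rfl : a = a' := by linear_combination h
      rfl
    · intro y
      set b := (y - τ y) / (θ - τ θ)
      have hb : τ b = b := by
        simp only [b, map_div₀, map_sub, hτ2]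
        rw [← neg_sub y, ← neg_sub θ, neg_div_neg_eq]
      refine ⟨(⟨y - b * θ, ?_⟩, ⟨b, hb⟩), by simp [f]⟩
      rw [map_sub, map_mul, hb]
      have : b * (θ - τ θ) = y - τ y := div_mul_cancel₀ _ hδ
      linear_combination this
  rw [← Nat.card_prod, Nat.card_congr (Equiv.ofBijective f hf)]

lemma card_eq_four_iff (hτne : (τ : K → K) ≠ id) (hτ2 : ∀ x, τ (τ x) = x) :
    Nat.card K = 4 ↔ ∀ c, τ c = c → c = 0 ∨ c = 1 := by
  rw [card_eq_card_fixed_mul_self τ hτne hτ2, show 4 = 2 * 2 from rfl, Nat.mul_self_inj,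
    Nat.card_eq_two_iff' (⟨0, map_zero τ⟩ : {x // τ x = x})]
  have h10 : (⟨1, map_one τ⟩ : {x // τ x = x}) ≠ ⟨0, map_zero τ⟩ := by simp
  constructor
  · rintro ⟨y, -, huniq⟩ c hc
    rw [or_iff_not_imp_left]
    intro hc0
    have h1 := huniq _ h10
    have h2 := huniq ⟨c, hc⟩ (by simpa using hc0)
    simpa using h2.trans h1.symm
  · intro h
    refine ⟨_, h10, fun y hy => Subtype.ext ((h y y.2).resolve_left ?_)⟩
    simpa [Subtype.ext_iff] using hy

variable {τ}

lemma two_eq_zero_of_fixed (hfix : ∀ c, τ c = c → c = 0 ∨ c = 1) : (2 : K) = 0 := by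
  rcases hfix 2 (map_ofNat τ 2) with h | h
  · exact h
  · have : (1 : K) = 0 := by linear_combination h
    exact absurd this one_ne_zero

variable (τ)

/-- A quadratic polynomial with nonzero leading coefficient has at most two roots, while
`0, d, c d` are three distinct elements with `τ z = -z`. -/
lemma exists_conj_eq_neg_quadratic_ne_zero (hτne : (τ : K → K) ≠ id)
    (hτ2 : ∀ x, τ (τ x) = x) {c : K} (hc : τ c = c) (hc0 : c ≠ 0) (hc1 : c ≠ 1) {A : K}
    (hA : A ≠ 0) (B C : K) : ∃ z, τ z = -z ∧ A * z ^ 2 + B * z + C ≠ 0 := by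
  obtain ⟨d, hd0, hd⟩ := exists_conj_eq_neg τ hτne hτ2
  by_contra! h
  have e0 := h 0 (by simp)
  have e1 := h d hd
  have e2 := h (c * d) (by rw [map_mul, hc, hd, mul_neg])
  have f1 : d * (A * d + B) = 0 := by linear_combination e1 - e0
  have f2 : (c * d) * (A * (c * d) + B) = 0 := by linear_combination e2 - e0
  have g1 := (mul_eq_zero.mp f1).resolve_left hd0
  have g2 := (mul_eq_zero.mp f2).resolve_left (mul_ne_zero hc0 hd0)
  have : A * d * (c - 1) = 0 := by linear_combination g2 - g1
  simp [hA, hd0, sub_eq_zero, hc1] at this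

/-- `α + τ β (1 + α γ)` is the value `Ψ(a, b)` for the vectors `a, b` built in
`exists_nondeg_pair_of_not_nondeg`. -/
lemma exists_trace_eq_one_norm_ne_one (hτne : (τ : K → K) ≠ id) (hτ2 : ∀ x, τ (τ x) = x)
    {c : K} (hc : τ c = c) (hc0 : c ≠ 0) (hc1 : c ≠ 1) (γ : K) :
    ∃ α β : K, α + τ α = 1 ∧ β + τ β = 1 ∧
      (α + τ β * (1 + α * γ)) * τ (α + τ β * (1 + α * γ)) ≠ 1 := by
  obtain ⟨θ, hθ⟩ := exists_add_conj_eq τ hτne hτ2 (map_one τ)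
  obtain ⟨d, hd0, hd⟩ := exists_conj_eq_neg τ hτne hτ2
  obtain ⟨α, hα, hm⟩ : ∃ α, α + τ α = 1 ∧ 1 + α * γ ≠ 0 := by
    by_cases h : 1 + θ * γ = 0
    · refine ⟨θ + d, by rw [map_add, hd]; linear_combination hθ, fun h' => ?_⟩
      have : d * γ = 0 := by linear_combination h' - h
      rcases mul_eq_zero.mp this with h0 | h0
      · exact hd0 h0
      · simp [h0] at h
    · exact ⟨θ, hθ, h⟩
  refine ⟨α, ?_⟩
  generalize 1 + α * γ = m at hm ⊢
  have hτm : τ m ≠ 0 := by rwa [map_ne_zero]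
  obtain ⟨z, hz, hzQ⟩ := exists_conj_eq_neg_quadratic_ne_zero τ hτne hτ2 hc hc0 hc1
    (neg_ne_zero.mpr (mul_ne_zero hm hτm)) ((α + τ θ * m) * τ m - m * (τ α + θ * τ m))
    ((α + τ θ * m) * (τ α + θ * τ m) - 1)
  refine ⟨θ + z, hα, by rw [map_add, hz]; linear_combination hθ, fun h => hzQ ?_⟩
  have hβ : τ (θ + z) = τ θ - z := by rw [map_add, hz, sub_eq_add_neg]
  rw [hβ, map_add, map_mul, map_sub, hτ2, hz] at h
  linear_combination h

end Scalars

theorem _root_.SimpleGraph.Adj.exists_walk_length_four {V : Type*} {G : SimpleGraph V}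
    {u v w : V} (h₁ : G.Adj u v) (h₂ : G.Adj v w) : ∃ p : G.Walk u w, p.length = 4 :=
  ⟨.cons h₁ (.cons h₁.symm (.cons h₁ (.cons h₂ .nil))), rfl⟩

theorem _root_.SimpleGraph.Walk.eq_or_adj {V : Type*} {G : SimpleGraph V}
    (htrans : ∀ {u v w}, G.Adj u v → G.Adj v w → w = u ∨ G.Adj u w) {u w : V}
    (p : G.Walk u w) : w = u ∨ G.Adj u w := by
  induction p with
  | nil => exact Or.inl rfl
  | cons h _ ih =>
    rcases ih with rfl | h'
    · exact Or.inr h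
    · exact htrans h h'

section Graph

open Module Submodule

variable (τ : K →+* K) {n : ℕ}

lemma isVertex_span_singleton {u : Fin n → K} (hu : Psi τ u u ≠ 0) : IsVertex τ (K ∙ u) :=
  ⟨finrank_span_singleton (ne_zero_of_Psi_self_ne_zero τ hu), nondeg_span_singleton τ hu⟩

def vertex {u : Fin n → K} (hu : Psi τ u u ≠ 0) :
    {S : Submodule K (Fin n → K) // IsVertex τ S} :=
  ⟨K ∙ u, isVertex_span_singleton τ hu⟩

variable {τ}

lemma IsVertex.eq_span_singleton {S : Submodule K (Fin n → K)} (hS : IsVertex τ S)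
    {u : Fin n → K} (hu : u ∈ S) (hu0 : u ≠ 0) : S = K ∙ u :=
  (eq_of_le_of_finrank_le ((span_singleton_le_iff_mem u S).mpr hu)
    (by rw [hS.1, finrank_span_singleton hu0])).symm

lemma IsVertex.Psi_self_ne_zero {S : Submodule K (Fin n → K)} (hS : IsVertex τ S)
    {u : Fin n → K} (hu : u ∈ S) (hu0 : u ≠ 0) : Psi τ u u ≠ 0 := by
  intro h
  have hperp : u ∈ perp τ S := by
    rw [hS.eq_span_singleton hu hu0, mem_perp_span_singleton_iff]
    exact h
  have : u ∈ S ⊓ perp τ S := ⟨hu, hperp⟩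
  rw [hS.2] at this
  exact hu0 ((mem_bot K).mp this)

variable (τ)

lemma exists_eq_vertex (S : {S : Submodule K (Fin n → K) // IsVertex τ S}) :
    ∃ u, ∃ hu : Psi τ u u ≠ 0, S = vertex τ hu := by
  obtain ⟨u, hu, hu0⟩ := exists_mem_ne_zero_of_ne_bot fun h : S.1 = ⊥ => by
    have h1 := S.2.1
    rw [h, finrank_bot] at h1
    exact zero_ne_one h1
  exact ⟨u, S.2.Psi_self_ne_zero hu hu0, Subtype.ext (S.2.eq_span_singleton hu hu0)⟩

lemma vertex_sup_vertex {u w : Fin n → K} (hu : Psi τ u u ≠ 0) (hw : Psi τ w w ≠ 0) :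
    (vertex τ hu).1 ⊔ (vertex τ hw).1 = span K {u, w} :=
  (span_insert u {w}).symm

lemma vertex_adj_vertex_iff (hτ2 : ∀ x, τ (τ x) = x) {u w : Fin n → K}
    (hu : Psi τ u u ≠ 0) (hw : Psi τ w w ≠ 0) :
    (FrameGraph τ hτ2 n).Adj (vertex τ hu) (vertex τ hw) ↔ Psi τ u w = 0 := by
  refine ⟨fun h => h.2 u (mem_span_singleton_self u) w (mem_span_singleton_self w),
    fun h => ⟨fun heq => hu ?_, fun s hs t ht => ?_⟩⟩
  · have huw : u ∈ perp τ (K ∙ w) := (mem_perp_span_singleton_iff τ).mpr h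
    have hspan : K ∙ u = K ∙ w := congrArg Subtype.val heq
    rwa [← hspan, mem_perp_span_singleton_iff] at huw
  · obtain ⟨a, rfl⟩ := mem_span_singleton.mp hs
    obtain ⟨b, rfl⟩ := mem_span_singleton.mp ht
    rw [Psi_smul_left, Psi_smul_right, h, mul_zero, mul_zero]

lemma exists_walk_length_four_of_mem_perp (hτ2 : ∀ x, τ (τ x) = x) {u w z : Fin n → K}
    (hu : Psi τ u u ≠ 0) (hw : Psi τ w w ≠ 0) (hz : z ∈ perp τ (span K {u, w}))
    (hzz : Psi τ z z ≠ 0) :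
    ∃ p : (FrameGraph τ hτ2 n).Walk (vertex τ hu) (vertex τ hw), p.length = 4 := by
  obtain ⟨hzu, hzw⟩ := (mem_perp_span_pair_iff τ).mp hz
  exact SimpleGraph.Adj.exists_walk_length_four
    ((vertex_adj_vertex_iff τ hτ2 hu hzz).mpr ((Psi_eq_zero_comm τ hτ2).mp hzu))
    ((vertex_adj_vertex_iff τ hτ2 hzz hw).mpr hzw)

end Graph

section Walks

open Module Submodule

variable (τ : K →+* K) {n : ℕ}

/-- Write `v = w + λ u` with `w ⊥ u`. In dimension `3`, `w` lies in the line `⟨y, u⟩^⊥`, so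
`w = 0` or `Ψ(w, w) ≠ 0`. Nonzero fixed elements equal `1` and `2 = 0`, so
`Ψ(v, v) = Ψ(w, w) + λ τ(λ) Ψ(u, u)` vanishes unless `w = 0` or `λ = 0`. -/
lemma Psi_eq_zero_or_span_eq_of_fixed (hτ2 : ∀ x, τ (τ x) = x)
    (hfix : ∀ c, τ c = c → c = 0 ∨ c = 1) {y u v : Fin 3 → K} (hy : Psi τ y y ≠ 0)
    (hu : Psi τ u u ≠ 0) (hv : Psi τ v v ≠ 0) (huy : Psi τ u y = 0) (hvy : Psi τ v y = 0) :
    Psi τ v u = 0 ∨ K ∙ v = K ∙ u := by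
  have hgram : gramDet τ y u ≠ 0 := by
    rw [gramDet_of_Psi_eq_zero τ ((Psi_eq_zero_comm τ hτ2).mp huy)]
    exact mul_ne_zero hy hu
  have hline : IsVertex τ (perp τ (span K {y, u})) := by
    refine ⟨?_, nondeg_perp τ hτ2 (nondeg_span_pair τ hgram)⟩
    rw [finrank_perp τ hτ2, finrank_span_pair τ hgram]
  obtain ⟨l, hl⟩ : ∃ l, l * Psi τ u u = Psi τ v u := ⟨_, div_mul_cancel₀ _ hu⟩
  obtain ⟨w, rfl⟩ : ∃ w, v = w + l • u := ⟨v - l • u, by simp⟩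
  rw [Psi_add_left, Psi_smul_left] at hl hvy
  have hwu : Psi τ w u = 0 := by linear_combination -hl
  have hwy : Psi τ w y = 0 := by rwa [huy, mul_zero, add_zero] at hvy
  by_cases hw0 : w = 0
  · right
    have hl0 : l ≠ 0 := by rintro rfl; simp [hw0, Psi_zero_left] at hv
    rw [hw0, zero_add, span_singleton_smul_eq (IsUnit.mk0 l hl0)]
  by_cases hl0 : l = 0
  · left
    rw [hl0, zero_smul, add_zero, hwu]
  exfalso
  have hww : Psi τ w w = 1 := by
    refine (hfix _ (by rw [← Psi_conj τ hτ2])).resolve_left (hline.Psi_self_ne_zero ?_ hw0)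
    exact (mem_perp_span_pair_iff τ).mpr ⟨hwy, hwu⟩
  have hlu : l * τ l * Psi τ u u = 1 := by
    refine (hfix _ ?_).resolve_left (mul_ne_zero (mul_ne_zero hl0 ?_) hu)
    · rw [map_mul, map_mul, hτ2, ← Psi_conj τ hτ2, mul_comm (τ l)]
    · rwa [map_ne_zero]
  apply hv
  rw [Psi_add_smul_add_smul, hww, hwu, (Psi_eq_zero_comm τ hτ2).mp hwu, hlu]
  linear_combination two_eq_zero_of_fixed hfix

lemma frameGraph_eq_or_adj_of_adj_of_adj (hτ2 : ∀ x, τ (τ x) = x)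
    (hfix : ∀ c, τ c = c → c = 0 ∨ c = 1) {S Y Z : {X : Submodule K (Fin 3 → K) // IsVertex τ X}}
    (hSY : (FrameGraph τ hτ2 3).Adj S Y) (hYZ : (FrameGraph τ hτ2 3).Adj Y Z) :
    Z = S ∨ (FrameGraph τ hτ2 3).Adj S Z := by
  obtain ⟨s, hs, rfl⟩ := exists_eq_vertex τ S
  obtain ⟨y, hy, rfl⟩ := exists_eq_vertex τ Y
  obtain ⟨z, hz, rfl⟩ := exists_eq_vertex τ Z
  rw [vertex_adj_vertex_iff] at hSY hYZ ⊢
  rcases Psi_eq_zero_or_span_eq_of_fixed τ hτ2 hfix hy hs hz hSY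
      ((Psi_eq_zero_comm τ hτ2).mp hYZ) with h | h
  · exact Or.inr ((Psi_eq_zero_comm τ hτ2).mp h)
  · exact Or.inl (Subtype.ext h)

lemma nondeg_sup_of_walk (hτ2 : ∀ x, τ (τ x) = x) (hfix : ∀ c, τ c = c → c = 0 ∨ c = 1)
    {S W : {X : Submodule K (Fin 3 → K) // IsVertex τ X}} (p : (FrameGraph τ hτ2 3).Walk S W) :
    Nondeg τ (S.1 ⊔ W.1) := by
  rcases p.eq_or_adj (frameGraph_eq_or_adj_of_adj_of_adj τ hτ2 hfix) with h | h
  · rw [h, sup_idem]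
    exact S.2.2
  obtain ⟨u, hu, rfl⟩ := exists_eq_vertex τ S
  obtain ⟨w, hw, rfl⟩ := exists_eq_vertex τ W
  rw [vertex_adj_vertex_iff] at h
  rw [vertex_sup_vertex]
  exact nondeg_span_pair τ (by rw [gramDet_of_Psi_eq_zero τ h]; exact mul_ne_zero hu hw)

lemma Nondeg.exists_hyperbolic_partner (hτne : (τ : K → K) ≠ id) (hτ2 : ∀ x, τ (τ x) = x)
    {P : Submodule K (Fin n → K)} (hP : Nondeg τ P) {r : Fin n → K} (hr : r ∈ P) (hr0 : r ≠ 0)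
    (hrr : Psi τ r r = 0) : ∃ r' ∈ P, Psi τ r r' = 1 ∧ Psi τ r' r' = 0 := by
  obtain ⟨x, hx, hrx⟩ : ∃ x ∈ P, Psi τ r x ≠ 0 := by
    by_contra! h
    have : r ∈ P ⊓ perp τ P := ⟨hr, fun s hs => h s hs⟩
    rw [hP] at this
    exact hr0 ((mem_bot K).mp this)
  set x' := τ (Psi τ r x)⁻¹ • x
  have hrx' : Psi τ r x' = 1 := by rw [Psi_smul_right, hτ2, inv_mul_cancel₀ hrx]
  have hx'r : Psi τ x' r = 1 := by rw [Psi_conj τ hτ2, hrx', map_one]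
  obtain ⟨μ, hμ⟩ := exists_add_conj_eq τ hτne hτ2 (Psi_conj τ hτ2 x' x').symm
  refine ⟨x' + (-μ) • r, P.add_mem (P.smul_mem _ hx) (P.smul_mem _ hr), ?_, ?_⟩
  · rw [Psi_add_right, hrx', Psi_smul_right, hrr, mul_zero, add_zero]
  · rw [Psi_add_smul_add_smul, hx'r, hrx', hrr, map_neg]
    linear_combination -hμ

/-- With `r` spanning the radical of `⟨u, w⟩` and hyperbolic partners `r₁ ⊥ u`, `r₂ ⊥ w` of `r`,
take `a = r + α r₁` and `b = r + β r₂` for the `α, β` of `exists_trace_eq_one_norm_ne_one`. -/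
lemma exists_nondeg_pair_of_not_nondeg (hτne : (τ : K → K) ≠ id) (hτ2 : ∀ x, τ (τ x) = x)
    {c : K} (hc : τ c = c) (hc0 : c ≠ 0) (hc1 : c ≠ 1) {u w : Fin n → K}
    (hu : Psi τ u u ≠ 0) (hw : Psi τ w w ≠ 0) (hdeg : ¬Nondeg τ (span K {u, w})) :
    ∃ a b, Psi τ a u = 0 ∧ Psi τ b w = 0 ∧ Psi τ a a = 1 ∧ Psi τ b b = 1 ∧
      gramDet τ a b ≠ 0 := by
  obtain ⟨r, ⟨hrU, hrperp⟩, hr0⟩ := exists_mem_ne_zero_of_ne_bot hdeg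
  have hrr : Psi τ r r = 0 := hrperp r hrU
  obtain ⟨hru, hrw⟩ := (mem_perp_span_pair_iff τ).mp hrperp
  obtain ⟨r₁, hr₁u, hrr₁, hr₁r₁⟩ :=
    (nondeg_perp τ hτ2 (nondeg_span_singleton τ hu)).exists_hyperbolic_partner τ hτne hτ2
      ((mem_perp_span_singleton_iff τ).mpr hru) hr0 hrr
  obtain ⟨r₂, hr₂w, hrr₂, hr₂r₂⟩ :=
    (nondeg_perp τ hτ2 (nondeg_span_singleton τ hw)).exists_hyperbolic_partner τ hτne hτ2
      ((mem_perp_span_singleton_iff τ).mpr hrw) hr0 hrr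
  rw [mem_perp_span_singleton_iff] at hr₁u hr₂w
  have hr₁r : Psi τ r₁ r = 1 := by rw [Psi_conj τ hτ2, hrr₁, map_one]
  have hr₂r : Psi τ r₂ r = 1 := by rw [Psi_conj τ hτ2, hrr₂, map_one]
  obtain ⟨α, β, hα, hβ, hN⟩ :=
    exists_trace_eq_one_norm_ne_one τ hτne hτ2 hc hc0 hc1 (Psi τ r₁ r₂)
  have haa : Psi τ (r + α • r₁) (r + α • r₁) = 1 := by
    rw [Psi_add_smul_add_smul, hrr, hrr₁, hr₁r, hr₁r₁]
    linear_combination hα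
  have hbb : Psi τ (r + β • r₂) (r + β • r₂) = 1 := by
    rw [Psi_add_smul_add_smul, hrr, hrr₂, hr₂r, hr₂r₂]
    linear_combination hβ
  have hab : Psi τ (r + α • r₁) (r + β • r₂) = α + τ β * (1 + α * Psi τ r₁ r₂) := by
    rw [Psi_add_smul_add_smul, hrr, hrr₂, hr₁r]
    ring
  refine ⟨r + α • r₁, r + β • r₂, ?_, ?_, haa, hbb, ?_⟩
  · rw [Psi_add_left, Psi_smul_left, hru, hr₁u, mul_zero, add_zero]
  · rw [Psi_add_left, Psi_smul_left, hrw, hr₂w, mul_zero, add_zero]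
  · rw [gramDet, haa, hbb, Psi_conj τ hτ2 (r + α • r₁), hab]
    intro h
    exact hN (by linear_combination -h)

lemma exists_walk_length_four_of_not_nondeg (hτne : (τ : K → K) ≠ id)
    (hτ2 : ∀ x, τ (τ x) = x) (hn : 3 ≤ n) {c : K} (hc : τ c = c) (hc0 : c ≠ 0) (hc1 : c ≠ 1)
    {u w : Fin n → K} (hu : Psi τ u u ≠ 0) (hw : Psi τ w w ≠ 0)
    (hdeg : ¬Nondeg τ (span K {u, w})) :
    ∃ p : (FrameGraph τ hτ2 n).Walk (vertex τ hu) (vertex τ hw), p.length = 4 := by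
  obtain ⟨a, b, hau, hbw, haa, hbb, hgram⟩ :=
    exists_nondeg_pair_of_not_nondeg τ hτne hτ2 hc hc0 hc1 hu hw hdeg
  obtain ⟨z, hz, hzz⟩ := (nondeg_span_pair τ hgram).exists_mem_perp_Psi_self_ne_zero τ hτne hτ2
    (by have := finrank_span_pair_le a b; omega)
  obtain ⟨hza, hzb⟩ := (mem_perp_span_pair_iff τ).mp hz
  have ha : Psi τ a a ≠ 0 := haa ▸ one_ne_zero
  have hb : Psi τ b b ≠ 0 := hbb ▸ one_ne_zero
  refine ⟨.cons ((vertex_adj_vertex_iff τ hτ2 hu ha).mpr ((Psi_eq_zero_comm τ hτ2).mp hau))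
    (.cons ((vertex_adj_vertex_iff τ hτ2 ha hzz).mpr ((Psi_eq_zero_comm τ hτ2).mp hza))
    (.cons ((vertex_adj_vertex_iff τ hτ2 hzz hb).mpr hzb)
    (.cons ((vertex_adj_vertex_iff τ hτ2 hb hw).mpr hbw) .nil))), rfl⟩

end Walks

theorem statement5_general (τ : K →+* K) (hτne : (⇑τ : K → K) ≠ id) (hτ2 : ∀ x, τ (τ x) = x)
    (n : ℕ) (hn : 3 ≤ n)
    (S W : {S : Submodule K (Fin n → K) // IsVertex (⇑τ) S}) :
    (∃ p : (FrameGraph τ hτ2 n).Walk S W, p.length = 4) ↔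
      (Nat.card K ≠ 4 ∨ n ≠ 3 ∨ Nondeg (⇑τ) (S.1 ⊔ W.1)) := by
  refine ⟨fun ⟨p, _⟩ => ?_, fun h => ?_⟩
  · by_contra! h
    obtain ⟨hK, rfl, hdeg⟩ := h
    exact hdeg (nondeg_sup_of_walk τ hτ2 ((card_eq_four_iff τ hτne hτ2).mp hK) p)
  obtain ⟨u, hu, rfl⟩ := exists_eq_vertex τ S
  obtain ⟨w, hw, rfl⟩ := exists_eq_vertex τ W
  rw [vertex_sup_vertex] at h
  have hU := finrank_span_pair_le u w
  by_cases hnd : Nondeg τ (Submodule.span K {u, w})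
  · obtain ⟨z, hz, hzz⟩ := hnd.exists_mem_perp_Psi_self_ne_zero τ hτne hτ2 (by omega)
    exact exists_walk_length_four_of_mem_perp τ hτ2 hu hw hz hzz
  by_cases hK : Nat.card K = 4
  · have hn3 : n ≠ 3 := by tauto
    obtain ⟨z, hz, hzz⟩ := exists_mem_perp_Psi_self_ne_zero_of_two_mul_finrank_le τ hτne hτ2
      (Submodule.subset_span (Set.mem_insert u {w})) hu (by omega)
    exact exists_walk_length_four_of_mem_perp τ hτ2 hu hw hz hzz
  obtain ⟨c, hc, hc0, hc1⟩ : ∃ c, τ c = c ∧ c ≠ 0 ∧ c ≠ 1 := by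
    simpa [card_eq_four_iff τ hτne hτ2, not_or] using hK
  exact exists_walk_length_four_of_not_nondeg τ hτne hτ2 hn hc hc0 hc1 hu hw hnd

/-- For `n ≥ 3`, under condition (ON), for any vertices `S, W` of `G(V)`,
there is a walk of length `4` from `S` to `W` iff `K` does not have exactly `4` elements,
or `n ≠ 3`, or `S + W` is non-degenerate. -/
theorem statement5 (τ : K →+* K) (hτne : (⇑τ : K → K) ≠ id) (hτ2 : ∀ x, τ (τ x) = x)
    (n : ℕ) (hn : 3 ≤ n)
    (hON : ∀ v : Fin n → K, ∃ x : K, Psi (⇑τ) v v = x * τ x)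
    (S W : {S : Submodule K (Fin n → K) // IsVertex (⇑τ) S}) :
    (∃ p : (FrameGraph τ hτ2 n).Walk S W, p.length = 4) ↔
      (Nat.card K ≠ 4 ∨ n ≠ 3 ∨ Nondeg (⇑τ) (S.1 ⊔ W.1)) :=
  statement5_general τ hτne hτ2 n hn S W

end FramePaper
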